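/- arXiv:2408.09581 — 2 statements merged into one kernel-verified Lean document; each statement's English description precedes it below -/
import Mathlib

section
/- Sufficiency step of the modal-equivalence theorem: let (W,R,S) be a wMIA frame, and for X ⊆ W let X̄ := X₁ ∪ X₂ denote the union of its two copies in W̄. Then for all X, Y ⊆ W and all s ∈ W̄: (r,s,t) ∈ R̄ for all r ∈ X̄ and t ∈ Ȳ if and only if (x, j(s), y) ∈ S for all x ∈ X and y ∈ Y. -/
/-- The projection `j : W ⊕ W → W` sending each element of either copy to the original. -/
def jmap {W : Type*} : W ⊕ W → W := Sum.elim id id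

/-- The cell `c(x,y,z)` of all triples over `W ⊕ W` projecting to `(x,y,z)`. -/
def cell {W : Type*} (x y z : W) : Set ((W ⊕ W) × (W ⊕ W) × (W ⊕ W)) :=
  {p | jmap p.1 = x ∧ jmap p.2.1 = y ∧ jmap p.2.2 = z}

/-- The mixture `m(P̄)` of a relation `P̄` on `W ⊕ W`. -/
def mix {W : Type*} (P : Set ((W ⊕ W) × (W ⊕ W) × (W ⊕ W))) :
    Set ((W ⊕ W) × (W ⊕ W) × (W ⊕ W)) :=
  ⋃ p ∈ P, cell (jmap p.1) (jmap p.2.1) (jmap p.2.2)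

/-- The first (left) copy `P₁` of a ternary relation `P` on `W`. -/
def inj1 {W : Type*} (P : Set (W × W × W)) : Set ((W ⊕ W) × (W ⊕ W) × (W ⊕ W)) :=
  (fun p => (Sum.inl p.1, Sum.inl p.2.1, Sum.inl p.2.2)) '' P

/-- The second (right) copy `P₂` of a ternary relation `P` on `W`. -/
def inj2 {W : Type*} (P : Set (W × W × W)) : Set ((W ⊕ W) × (W ⊕ W) × (W ⊕ W)) :=
  (fun p => (Sum.inr p.1, Sum.inr p.2.1, Sum.inr p.2.2)) '' P

/-- The relation `R̄` of the special frame obtained from a wMIA frame `(W,R,S)`. -/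
def Rbar {W : Type*} (R S : Set (W × W × W)) : Set ((W ⊕ W) × (W ⊕ W) × (W ⊕ W)) :=
  mix (inj1 S) ∪ (mix (inj1 (R \ S)) \ (inj1 R ∪ inj2 R))

/-- The union `X̄ = X₁ ∪ X₂` of the two copies of `X ⊆ W` in `W ⊕ W`. -/
def dbl {W : Type*} (X : Set W) : Set (W ⊕ W) := Sum.inl '' X ∪ Sum.inr '' X

lemma mem_mix_inj1 {W : Type*} (P : Set (W × W × W)) (r s t : W ⊕ W) :
    (r, s, t) ∈ mix (inj1 P) ↔ (jmap r, jmap s, jmap t) ∈ P := by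
  constructor
  · rintro h
    simp only [mix, Set.mem_iUnion, inj1, Set.mem_image] at h
    obtain ⟨p, ⟨⟨a, ha, rfl⟩, hc⟩⟩ := h
    obtain ⟨h1, h2, h3⟩ := hc
    simp only [jmap, Sum.elim_inl, id_eq] at h1 h2 h3 ⊢
    rw [h1, h2, h3]
    exact ha
  · intro h
    simp only [mix, Set.mem_iUnion, inj1, Set.mem_image]
    exact ⟨(Sum.inl (jmap r), Sum.inl (jmap s), Sum.inl (jmap t)),
      ⟨⟨(jmap r, jmap s, jmap t), h, rfl⟩, by simp [cell, jmap]⟩⟩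

/-- Sufficiency step of the modal-equivalence theorem. -/
theorem sufficiency_step {W : Type*} (R S : Set (W × W × W)) (hSR : S ⊆ R)
    (X Y : Set W) (s : W ⊕ W) :
    (∀ r ∈ dbl X, ∀ t ∈ dbl Y, (r, s, t) ∈ Rbar R S) ↔
      (∀ x ∈ X, ∀ y ∈ Y, (x, jmap s, y) ∈ S) :=  by
  constructor
  · intro h x hx y hy
    -- choose r, t in the same copy as s
    cases s with
    | inl s' =>
      have hm := h (Sum.inl x) (Or.inl ⟨x, hx, rfl⟩) (Sum.inl y) (Or.inl ⟨y, hy, rfl⟩)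
      rcases hm with hm | ⟨hm, hne⟩
      · rw [mem_mix_inj1] at hm; exact hm
      · exfalso
        rw [mem_mix_inj1] at hm
        exact hne (Or.inl ⟨(x, s', y), hm.1, rfl⟩)
    | inr s' =>
      have hm := h (Sum.inr x) (Or.inr ⟨x, hx, rfl⟩) (Sum.inr y) (Or.inr ⟨y, hy, rfl⟩)
      rcases hm with hm | ⟨hm, hne⟩
      · rw [mem_mix_inj1] at hm; exact hm
      · exfalso
        rw [mem_mix_inj1] at hm
        exact hne (Or.inr ⟨(x, s', y), hm.1, rfl⟩)
  · intro h r hr t ht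
    left
    rw [mem_mix_inj1]
    have hxr : jmap r ∈ X := by
      rcases hr with ⟨x, hx, rfl⟩ | ⟨x, hx, rfl⟩ <;> simpa [jmap] using hx
    have hyt : jmap t ∈ Y := by
      rcases ht with ⟨y, hy, rfl⟩ | ⟨y, hy, rfl⟩ <;> simpa [jmap] using hy
    exact h _ hxr _ hyt
end

section
/- Let (A,f,g) be a subdirectly irreducible PS-algebra satisfying the equations (4.1) u(a,⊥) ≤ a, (4.2) u(a,⊥) ≤ u(u(a,⊥),⊥), (4.3) a ≤ u(-u(-a,⊥),⊥), and (4.4) u(a,a) = u(a,⊥) = u(⊥,a). Then condition (di) holds in A. If in addition A satisfies (4.5) u(a,b) = u(a,⊥) ⊔ u(⊥,b), then A is a weak MIA. -/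
/-- A binary possibility operator on a Boolean algebra. -/
def IsPossibilityOp {A : Type*} [BooleanAlgebra A] (f : A → A → A) : Prop :=
  (∀ a, f a ⊥ = ⊥) ∧ (∀ a, f ⊥ a = ⊥) ∧
  (∀ a b b', f a b ⊔ f a b' = f a (b ⊔ b')) ∧
  (∀ a a' b, f a b ⊔ f a' b = f (a ⊔ a') b)

/-- A binary sufficiency operator on a Boolean algebra. -/
def IsSufficiencyOp {A : Type*} [BooleanAlgebra A] (g : A → A → A) : Prop :=
  (∀ a, g a ⊥ = ⊤) ∧ (∀ a, g ⊥ a = ⊤) ∧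
  (∀ a b b', g a b ⊓ g a b' = g a (b ⊔ b')) ∧
  (∀ a a' b, g a b ⊓ g a' b = g (a ⊔ a') b)

/-- The dual `f^∂(a,b) = -f(-a,-b)` of a possibility operator. -/
def fdual {A : Type*} [BooleanAlgebra A] (f : A → A → A) (a b : A) : A := (f aᶜ bᶜ)ᶜ

/-- The operator `g*(a,b) = g(-a,-b)`. -/
def gstar {A : Type*} [BooleanAlgebra A] (g : A → A → A) (a b : A) : A := g aᶜ bᶜ

/-- The auxiliary operator `u(a,b) = f^∂(a,b) ⊓ g*(a,b)`. -/
def uop {A : Type*} [BooleanAlgebra A] (f g : A → A → A) (a b : A) : A :=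
  fdual f a b ⊓ gstar g a b

/-- A filter on a Boolean algebra: nonempty, upward closed, closed under meets. -/
def IsFilter' {A : Type*} [BooleanAlgebra A] (F : Set A) : Prop :=
  F.Nonempty ∧ (∀ a ∈ F, ∀ b, a ≤ b → b ∈ F) ∧ (∀ a ∈ F, ∀ b ∈ F, a ⊓ b ∈ F)

/-- The symmetric sum `a∇b = (a ⊓ b) ⊔ (-a ⊓ -b)`. -/
def nabla {A : Type*} [BooleanAlgebra A] (a b : A) : A := a ⊓ b ⊔ aᶜ ⊓ bᶜ

/-- The Boolean congruence `θ_F` induced by a filter `F`. -/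
def theta {A : Type*} [BooleanAlgebra A] (F : Set A) (a b : A) : Prop := nabla a b ∈ F

/-- A congruence filter: a filter whose congruence is compatible with `f^∂` and `g*`. -/
def IsCongruenceFilter {A : Type*} [BooleanAlgebra A] (f g : A → A → A) (F : Set A) : Prop :=
  IsFilter' F ∧
  ∀ a a' b b', theta F a a' → theta F b b' →
    theta F (fdual f a b) (fdual f a' b') ∧ theta F (gstar g a b) (gstar g a' b')

/-- A PS-algebra is subdirectly irreducible if there is a smallest congruence filter
among those different from `{⊤}`. -/
def SubdirectlyIrreducible {A : Type*} [BooleanAlgebra A] (f g : A → A → A) : Prop :=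
  ∃ F₀ : Set A, IsCongruenceFilter f g F₀ ∧ F₀ ≠ {⊤} ∧
    ∀ F : Set A, IsCongruenceFilter f g F → F ≠ {⊤} → F₀ ⊆ F


section Helpers

variable {A : Type*} [BooleanAlgebra A]

/-- Boolean shunting: from `e ⊓ w ≤ z` infer `e ⊓ zᶜ ≤ wᶜ`. -/
lemma ps_shunt {e w z : A} (h : e ⊓ w ≤ z) : e ⊓ zᶜ ≤ wᶜ := by
  have hb : e ⊓ zᶜ ⊓ w ≤ ⊥ := by
    calc e ⊓ zᶜ ⊓ w = (e ⊓ w) ⊓ zᶜ := by ac_rfl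
      _ ≤ z ⊓ zᶜ := inf_le_inf_right _ h
      _ = ⊥ := inf_compl_eq_bot
  have : Disjoint (e ⊓ zᶜ) w := disjoint_iff.mpr (le_bot_iff.mp hb)
  exact le_compl_iff_disjoint_right.mpr this

lemma ps_of_compl_inf_eq_bot {x y : A} (h : xᶜ ⊓ y = ⊥) : y ≤ x := by
  have : y = y ⊓ x ⊔ y ⊓ xᶜ := by
    rw [← inf_sup_left, sup_compl_eq_top, inf_top_eq]
  calc y = y ⊓ x ⊔ y ⊓ xᶜ := this
    _ ≤ x ⊔ ⊥ := sup_le_sup inf_le_right (by rw [inf_comm]; exact le_of_eq h)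
    _ = x := sup_bot_eq x

lemma ps_nabla_le {e a b : A} (h : e ≤ nabla a b) : e ⊓ a ≤ b := by
  have h1 : e ⊓ a ≤ (a ⊓ b ⊔ aᶜ ⊓ bᶜ) ⊓ a := inf_le_inf_right a h
  refine le_trans h1 ?_
  rw [inf_sup_right]
  refine sup_le (le_trans inf_le_left inf_le_right) ?_
  have : aᶜ ⊓ bᶜ ⊓ a ≤ aᶜ ⊓ a := inf_le_inf_right a inf_le_left
  rw [compl_inf_eq_bot] at this
  exact le_trans this bot_le

lemma ps_nabla_comm (a b : A) : nabla a b = nabla b a := by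
  unfold nabla; rw [inf_comm, inf_comm aᶜ]

lemma ps_nabla_compl (a b : A) : nabla aᶜ bᶜ = nabla a b := by
  unfold nabla; rw [compl_compl, compl_compl, sup_comm]

lemma ps_le_nabla {e a b : A} (h1 : e ⊓ a ≤ b) (h2 : e ⊓ aᶜ ≤ bᶜ) : e ≤ nabla a b := by
  have : e = e ⊓ a ⊔ e ⊓ aᶜ := by
    rw [← inf_sup_left, sup_compl_eq_top, inf_top_eq]
  calc e = e ⊓ a ⊔ e ⊓ aᶜ := this
    _ ≤ a ⊓ b ⊔ aᶜ ⊓ bᶜ := sup_le_sup (le_inf inf_le_right h1) (le_inf inf_le_right h2)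

end Helpers

/-- Theorem: in a subdirectly irreducible PS-algebra satisfying (4.1)–(4.4) condition (di)
holds; if moreover (4.5) holds, then the algebra is a weak MIA. -/
theorem si_implies_di_and_wMIA {A : Type*} [BooleanAlgebra A] [Nontrivial A]
    (f g : A → A → A) (hf : IsPossibilityOp f) (hg : IsSufficiencyOp g)
    (h41 : ∀ a : A, uop f g a ⊥ ≤ a)
    (h42 : ∀ a : A, uop f g a ⊥ ≤ uop f g (uop f g a ⊥) ⊥)
    (h43 : ∀ a : A, a ≤ uop f g (uop f g aᶜ ⊥)ᶜ ⊥)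
    (h44 : ∀ a : A, uop f g a a = uop f g a ⊥ ∧ uop f g a ⊥ = uop f g ⊥ a)
    (hsi : SubdirectlyIrreducible f g) :
    (∀ a b : A, a ⊓ b ≠ ⊥ → g a b ≤ f a b) ∧
    ((∀ a b : A, uop f g a b = uop f g a ⊥ ⊔ uop f g ⊥ b) →
      ∀ a b : A, a ≠ ⊥ → b ≠ ⊥ → g a b ≤ f a b) := by
  obtain ⟨hf1, hf2, hf3, hf4⟩ := hf
  obtain ⟨hg1, hg2, hg3, hg4⟩ := hg
  -- monotonicity of f in both arguments
  have fmono : ∀ {p p' q q' : A}, p ≤ p' → q ≤ q' → f p q ≤ f p' q' := by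
    intro p p' q q' hp hq
    have s1 : f p q ≤ f p' q := by
      have h : f p q ⊔ f p' q = f p' q := by rw [hf4, sup_eq_right.mpr hp]
      rw [← h]; exact le_sup_left
    have s2 : f p' q ≤ f p' q' := by
      have h : f p' q ⊔ f p' q' = f p' q' := by rw [hf3, sup_eq_right.mpr hq]
      rw [← h]; exact le_sup_left
    exact le_trans s1 s2
  -- antitonicity of g in both arguments
  have ganti : ∀ {p p' q q' : A}, p ≤ p' → q ≤ q' → g p' q' ≤ g p q := by
    intro p p' q q' hp hq
    have s1 : g p' q' ≤ g p q' := by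
      have h : g p q' ⊓ g p' q' = g p' q' := by rw [hg4, sup_eq_right.mpr hp]
      rw [← h]; exact inf_le_left
    have s2 : g p q' ≤ g p q := by
      have h : g p q ⊓ g p q' = g p q' := by rw [hg3, sup_eq_right.mpr hq]
      rw [← h]; exact inf_le_left
    exact le_trans s1 s2
  -- properties of "open" elements e (fixed points of h(a) = u(a,⊥))
  have open_props : ∀ e : A, uop f g e ⊥ = e →
      f eᶜ ⊤ ≤ eᶜ ∧ f ⊤ eᶜ ≤ eᶜ ∧ e ≤ g eᶜ ⊤ ∧ e ≤ g ⊤ eᶜ := by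
    intro e he
    have he2 : uop f g ⊥ e = e := by rw [← (h44 e).2, he]
    have q1 : e ≤ (f eᶜ ⊤)ᶜ := by
      conv_lhs => rw [← he]
      unfold uop fdual gstar; rw [compl_bot]; exact inf_le_left
    have q2 : e ≤ g eᶜ ⊤ := by
      conv_lhs => rw [← he]
      unfold uop fdual gstar; rw [compl_bot]; exact inf_le_right
    have q3 : e ≤ (f ⊤ eᶜ)ᶜ := by
      conv_lhs => rw [← he2]
      unfold uop fdual gstar; rw [compl_bot]; exact inf_le_left
    have q4 : e ≤ g ⊤ eᶜ := by
      conv_lhs => rw [← he2]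
      unfold uop fdual gstar; rw [compl_bot]; exact inf_le_right
    refine ⟨?_, ?_, q2, q4⟩
    · have := compl_le_compl q1; rwa [compl_compl] at this
    · have := compl_le_compl q3; rwa [compl_compl] at this
  -- the principal filter of an open element is a congruence filter
  have cong : ∀ e : A, uop f g e ⊥ = e → IsCongruenceFilter f g {x | e ≤ x} := by
    intro e he
    obtain ⟨p1, p2, p3, p4⟩ := open_props e he
    have sup_of : ∀ {x y : A}, e ⊓ x ≤ y → x ≤ y ⊔ eᶜ := by
      intro x y h
      have h' : x \ eᶜ ≤ y := by rw [sdiff_eq, compl_compl, inf_comm]; exact h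
      have h'' := sdiff_le_iff.mp h'
      rwa [sup_comm] at h''
    have fkey : ∀ {x x' y y' : A}, e ⊓ x ≤ x' → e ⊓ y ≤ y' → e ⊓ f x y ≤ f x' y' := by
      intro x x' y y' hx hy
      have h1 : f x y ≤ f (x' ⊔ eᶜ) (y' ⊔ eᶜ) := fmono (sup_of hx) (sup_of hy)
      have h2 : f (x' ⊔ eᶜ) (y' ⊔ eᶜ) = f x' (y' ⊔ eᶜ) ⊔ f eᶜ (y' ⊔ eᶜ) := (hf4 _ _ _).symm
      have h3 : f x' (y' ⊔ eᶜ) = f x' y' ⊔ f x' eᶜ := (hf3 _ _ _).symm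
      have b1 : f x' eᶜ ≤ eᶜ := le_trans (fmono le_top (le_refl _)) p2
      have b2 : f eᶜ (y' ⊔ eᶜ) ≤ eᶜ := le_trans (fmono (le_refl _) le_top) p1
      have h4 : f x y ≤ f x' y' ⊔ eᶜ := by
        refine le_trans h1 ?_
        rw [h2, h3]
        exact sup_le (sup_le le_sup_left (le_trans b1 le_sup_right))
          (le_trans b2 le_sup_right)
      calc e ⊓ f x y ≤ e ⊓ (f x' y' ⊔ eᶜ) := inf_le_inf_left e h4
        _ = e ⊓ f x' y' := by rw [inf_sup_left, inf_compl_eq_bot, sup_bot_eq]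
        _ ≤ f x' y' := inf_le_right
    have gkey : ∀ {x x' y y' : A}, e ⊓ x' ≤ x → e ⊓ y' ≤ y → e ⊓ g x y ≤ g x' y' := by
      intro x x' y y' hx hy
      have h1 : g (x ⊔ eᶜ) (y ⊔ eᶜ) ≤ g x' y' := ganti (sup_of hx) (sup_of hy)
      have h2 : g (x ⊔ eᶜ) (y ⊔ eᶜ) = g x (y ⊔ eᶜ) ⊓ g eᶜ (y ⊔ eᶜ) := (hg4 _ _ _).symm
      have h3 : g x (y ⊔ eᶜ) = g x y ⊓ g x eᶜ := (hg3 _ _ _).symm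
      have b1 : e ≤ g x eᶜ := le_trans p4 (ganti le_top (le_refl _))
      have b2 : e ≤ g eᶜ (y ⊔ eᶜ) := le_trans p3 (ganti (le_refl _) le_top)
      have h4 : e ⊓ g x y ≤ g (x ⊔ eᶜ) (y ⊔ eᶜ) := by
        rw [h2, h3]
        exact le_inf (le_inf inf_le_right (le_trans inf_le_left b1))
          (le_trans inf_le_left b2)
      exact le_trans h4 h1
    refine ⟨⟨⟨e, le_refl e⟩, fun a ha b hab => le_trans ha hab,
      fun a ha b hb => le_inf ha hb⟩, ?_⟩
    intro a a' b b' ha hb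
    have ha1 : e ≤ nabla a a' := ha
    have hb1 : e ≤ nabla b b' := hb
    have ha2 : e ≤ nabla a' a := by rw [ps_nabla_comm]; exact ha1
    have hb2 : e ≤ nabla b' b := by rw [ps_nabla_comm]; exact hb1
    have hac : e ⊓ aᶜ ≤ a'ᶜ := ps_nabla_le (by rw [ps_nabla_compl]; exact ha1)
    have hac' : e ⊓ a'ᶜ ≤ aᶜ := ps_nabla_le (by rw [ps_nabla_compl]; exact ha2)
    have hbc : e ⊓ bᶜ ≤ b'ᶜ := ps_nabla_le (by rw [ps_nabla_compl]; exact hb1)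
    have hbc' : e ⊓ b'ᶜ ≤ bᶜ := ps_nabla_le (by rw [ps_nabla_compl]; exact hb2)
    constructor
    · show e ≤ nabla (fdual f a b) (fdual f a' b')
      unfold fdual
      apply ps_le_nabla
      · exact ps_shunt (fkey hac' hbc')
      · rw [compl_compl, compl_compl]
        exact fkey hac hbc
    · show e ≤ nabla (gstar g a b) (gstar g a' b')
      unfold gstar
      apply ps_le_nabla
      · exact gkey hac' hbc'
      · exact ps_shunt (gkey hac hbc)
  -- key: h(d) = ⊥ for every d ≠ ⊤
  have key : ∀ d : A, d ≠ ⊤ → uop f g d ⊥ = ⊥ := by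
    intro d hd
    by_contra hne
    set e := uop f g d ⊥ with hedef
    have heo : uop f g e ⊥ = e := le_antisymm (h41 e) (h42 d)
    have hed : e ≤ d := h41 d
    have hent : e ≠ ⊤ := fun h => hd (top_le_iff.mp (h ▸ hed))
    have heco : uop f g eᶜ ⊥ = eᶜ := by
      apply le_antisymm (h41 eᶜ)
      have h3 := h43 eᶜ
      rwa [compl_compl, heo] at h3
    have hecnt : eᶜ ≠ ⊤ := fun h => hne (compl_eq_top.mp h)
    obtain ⟨F₀, hF₀c, hF₀ne, hmin⟩ := hsi
    have nesing : ∀ c : A, c ≠ ⊤ → ({x | c ≤ x} : Set A) ≠ {⊤} := by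
      intro c hc h
      have : c ∈ ({⊤} : Set A) := h ▸ (show c ∈ {x | c ≤ x} from le_refl c)
      exact hc this
    have sub1 : F₀ ⊆ {x | e ≤ x} := hmin _ (cong e heo) (nesing e hent)
    have sub2 : F₀ ⊆ {x | eᶜ ≤ x} := hmin _ (cong eᶜ heco) (nesing eᶜ hecnt)
    obtain ⟨⟨y, hy⟩, hup, hmeet⟩ := hF₀c.1
    have hx : ∃ x ∈ F₀, x ≠ ⊤ := by
      by_contra hall
      push_neg at hall
      apply hF₀ne
      apply Set.eq_singleton_iff_unique_mem.mpr
      exact ⟨(hall y hy) ▸ hy, fun x hxF => hall x hxF⟩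
    obtain ⟨x, hxF, hxne⟩ := hx
    apply hxne
    apply top_le_iff.mp
    calc (⊤ : A) = e ⊔ eᶜ := sup_compl_eq_top.symm
      _ ≤ x := sup_le (sub1 hxF) (sub2 hxF)
  -- monotonicity of u
  have umono : ∀ {p p' q q' : A}, p ≤ p' → q ≤ q' → uop f g p q ≤ uop f g p' q' := by
    intro p p' q q' hp hq
    unfold uop fdual gstar
    exact inf_le_inf
      (compl_le_compl (fmono (compl_le_compl hp) (compl_le_compl hq)))
      (ganti (compl_le_compl hp) (compl_le_compl hq))
  -- conversion: u(aᶜ,bᶜ) = ⊥ gives g a b ≤ f a b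
  have conv : ∀ a b : A, uop f g aᶜ bᶜ = ⊥ → g a b ≤ f a b := by
    intro a b h
    unfold uop fdual gstar at h
    rw [compl_compl, compl_compl] at h
    exact ps_of_compl_inf_eq_bot h
  refine ⟨?_, ?_⟩
  · intro a b hab
    apply conv
    have h1 : uop f g aᶜ bᶜ ≤ uop f g (a ⊓ b)ᶜ (a ⊓ b)ᶜ :=
      umono (compl_le_compl inf_le_left) (compl_le_compl inf_le_right)
    rw [(h44 (a ⊓ b)ᶜ).1, key _ (fun h => hab (compl_eq_top.mp h))] at h1
    exact le_bot_iff.mp h1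
  · intro h45 a b ha hb
    apply conv
    rw [h45 aᶜ bᶜ, ← (h44 bᶜ).2, key aᶜ (fun h => ha (compl_eq_top.mp h)),
      key bᶜ (fun h => hb (compl_eq_top.mp h)), bot_sup_eq]
end
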